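/- If a hyperpath H' from p_0 to f in C(φ) contains the edge ({p_n}, {q_0}), then the truth assignment defined by setting v_i true iff H' contains the 'true' edge for v_i satisfies every clause of φ. -/

import Mathlib

/-- A directed hypergraph: finite vertex set, finite set of hyperedges,
each hyperedge `e = (T_e, H_e)` with tail `T_e ⊆ V`, head `H_e ⊆ V \ T_e`. -/
structure DiHypergraph (V : Type*) [DecidableEq V] where
  verts : Finset V
  edges : Finset (Finset V × Finset V)
  tail_sub : ∀ e ∈ edges, e.1 ⊆ verts
  head_sub : ∀ e ∈ edges, e.2 ⊆ verts
  disj : ∀ e ∈ edges, Disjoint e.1 e.2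

variable {V : Type*} [DecidableEq V]

/-- Subhypergraph relation. -/
def Subhg (H' H : DiHypergraph V) : Prop :=
  H'.verts ⊆ H.verts ∧ H'.edges ⊆ H.edges

/-- Union of the heads of a list of hyperedges. -/
def headsUnion (L : List (Finset V × Finset V)) : Finset V :=
  L.foldr (fun e acc => e.2 ∪ acc) ∅

/-- The hyperedges of `H'` can be ordered `⟨e_1, …, e_k⟩` so that
`T(e_i) ⊆ {s} ∪ H(e_1) ∪ ⋯ ∪ H(e_{i-1})` and `d ∈ H(e_k)`. -/
def HasOrdering (H' : DiHypergraph V) (s d : V) : Prop :=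
  ∃ L : List (Finset V × Finset V), L.Nodup ∧ L.toFinset = H'.edges ∧
    (∀ i : Fin L.length, (L.get i).1 ⊆ insert s (headsUnion (L.take (i : ℕ)))) ∧
    ∃ e, L.getLast? = some e ∧ d ∈ e.2

/-- A hyperpath from `s` to `d` in `H` is a subhypergraph of `H`, minimal with
respect to deletion of vertices and edges, admitting a valid edge ordering. -/
def IsHyperpath (H : DiHypergraph V) (s d : V) (H' : DiHypergraph V) : Prop :=
  Subhg H' H ∧ HasOrdering H' s d ∧
    ∀ H'' : DiHypergraph V, Subhg H'' H' → HasOrdering H'' s d → H'' = H'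

/-- `PathFrom H s d vs es` : `vs` and `es` form a (simple graph-style) path
`(v₁ = s, e₁, v₂, …, e_q, v_{q+1} = d)` with `vᵢ ∈ T(eᵢ)`, `v_{i+1} ∈ H(eᵢ)`,
all edges taken from `H`. -/
inductive PathFrom (H : DiHypergraph V) : V → V → List V → List (Finset V × Finset V) → Prop
  | single {s d : V} {e : Finset V × Finset V} :
      e ∈ H.edges → s ∈ e.1 → d ∈ e.2 → PathFrom H s d [s, d] [e]
  | cons {s v d : V} {vs : List V} {es : List (Finset V × Finset V)}
      {e : Finset V × Finset V} :
      e ∈ H.edges → s ∈ e.1 → v ∈ e.2 → PathFrom H v d vs es →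
      PathFrom H s d (s :: vs) (e :: es)

/-! ### The 3-SAT construction `C(φ)`

A 3-SAT instance with `n` variables and `m` clauses is `φ : Fin m → Fin 3 → Fin n × Bool`:
literal `j` of clause `i` is `(v, sign)`, positive if `sign = true`. -/

/-- An assignment `σ` satisfies the 3-SAT instance `φ`. -/
def SatAssign {n m : ℕ} (φ : Fin m → Fin 3 → Fin n × Bool) (σ : Fin n → Bool) : Prop :=
  ∀ i : Fin m, ∃ j : Fin 3, σ (φ i j).1 = (φ i j).2

/-- Vertices of the construction `C(φ)`. -/
inductive Vtx (n m : ℕ) where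
  | p (i : Fin (n + 1))
  | q0
  | q (i : Fin m) (j : Fin 3)
  | f
deriving DecidableEq, Fintype

/-- The edge assigning variable `v_i` the value `b`: tail `{p_{i-1}}`, head
`{p_i}` together with the `q`-vertices of the clause literals blocked by the
assignment (the occurrences of `v_i` with sign `!b`). -/
def varEdge {n m : ℕ} (φ : Fin m → Fin 3 → Fin n × Bool) (i : Fin n) (b : Bool) :
    Finset (Vtx n m) × Finset (Vtx n m) :=
  ({Vtx.p i.castSucc},
    insert (Vtx.p i.succ)
      (((Finset.univ : Finset (Fin m × Fin 3)).filter
          (fun xy => φ xy.1 xy.2 = (i, !b))).image fun xy => Vtx.q xy.1 xy.2))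

/-- The head of the clause edges for clause `i`: the three `q`-vertices of
clause `i+1`, or `{f}` for the last clause. -/
def nextQ {n m : ℕ} (i : Fin m) : Finset (Vtx n m) :=
  if h : (i : ℕ) + 1 < m then
    {Vtx.q ⟨(i : ℕ) + 1, h⟩ 0, Vtx.q ⟨(i : ℕ) + 1, h⟩ 1, Vtx.q ⟨(i : ℕ) + 1, h⟩ 2}
  else {Vtx.f}

/-- The edge choosing literal `j` to satisfy clause `i`. -/
def clauseEdge {n m : ℕ} (i : Fin m) (j : Fin 3) :
    Finset (Vtx n m) × Finset (Vtx n m) :=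
  ({Vtx.q i j}, nextQ i)

/-- The forced edge `({p_n}, {q_0})`. -/
def forcedEdge (n m : ℕ) : Finset (Vtx n m) × Finset (Vtx n m) :=
  ({Vtx.p (Fin.last n)}, {Vtx.q0})

/-- The connector edge `({q_0}, {q_{1,1}, q_{1,2}, q_{1,3}})`. -/
def q0Edge (n m : ℕ) : Finset (Vtx n m) × Finset (Vtx n m) :=
  ({Vtx.q0},
    if h : 0 < m then {Vtx.q ⟨0, h⟩ 0, Vtx.q ⟨0, h⟩ 1, Vtx.q ⟨0, h⟩ 2}
    else {Vtx.f})

/-- The construction `C(φ)`. -/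
def Cphi {n m : ℕ} (φ : Fin m → Fin 3 → Fin n × Bool) : DiHypergraph (Vtx n m) where
  verts := Finset.univ
  edges :=
    ((Finset.univ : Finset (Fin n × Bool)).image fun ib => varEdge φ ib.1 ib.2) ∪
    ((Finset.univ : Finset (Fin m × Fin 3)).image fun ij => clauseEdge ij.1 ij.2) ∪
    {forcedEdge n m, q0Edge n m}
  tail_sub := fun _ _ => Finset.subset_univ _
  head_sub := fun _ _ => Finset.subset_univ _
  disj := by
    intro e he
    simp only [Finset.mem_union, Finset.mem_image, Finset.mem_univ, true_and,
      Finset.mem_insert, Finset.mem_singleton, Prod.exists] at he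
    rcases he with (⟨i, b, rfl⟩ | ⟨i, j, rfl⟩) | (rfl | rfl)
    · simp only [varEdge, Finset.disjoint_singleton_left, Finset.mem_insert,
        Finset.mem_image, Finset.mem_filter, Finset.mem_univ, true_and, Prod.exists]
      rintro (h | ⟨x, y, _, h⟩)
      · exact absurd (Vtx.p.injEq .. ▸ congrArg id h)
          (by simpa using (Fin.castSucc_lt_succ : i.castSucc < i.succ).ne)
      · cases h
    · simp only [clauseEdge, nextQ, Finset.disjoint_singleton_left]
      split
      · simp only [Finset.mem_insert, Finset.mem_singleton]
        rintro (h | h | h) <;>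
          { injection h with h1 h2
            exact absurd (congrArg Fin.val h1) (by simp) }
      · simp
    · simp [forcedEdge]
    · simp only [q0Edge, Finset.disjoint_singleton_left]
      split <;> simp

section AuxBasic
variable {V : Type*} [DecidableEq V]

lemma mem_headsUnion {x : V} {L : List (Finset V × Finset V)} :
    x ∈ headsUnion L ↔ ∃ e ∈ L, x ∈ e.2 := by
  induction L with
  | nil => simp [headsUnion]
  | cons e L ih =>
      simp only [headsUnion, List.foldr_cons, Finset.mem_union, List.mem_cons]
      constructor
      · rintro (h | h)
        · exact ⟨e, Or.inl rfl, h⟩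
        · obtain ⟨e', he', hx⟩ := ih.mp h
          exact ⟨e', Or.inr he', hx⟩
      · rintro ⟨e', (rfl | he'), hx⟩
        · exact Or.inl hx
        · exact Or.inr (ih.mpr ⟨e', he', hx⟩)

/-- Accumulator-style validity of an edge ordering. -/
def OKfrom (s : V) : Finset V → List (Finset V × Finset V) → Prop
  | _, [] => True
  | acc, e :: rest => e.1 ⊆ insert s acc ∧ OKfrom s (acc ∪ e.2) rest

lemma okfrom_get {s : V} : ∀ {L : List (Finset V × Finset V)} {acc : Finset V},
    OKfrom s acc L → ∀ i : Fin L.length,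
      (L.get i).1 ⊆ insert s (acc ∪ headsUnion (L.take (i : ℕ)))
  | [], _, _, i => i.elim0
  | e :: L, acc, h, i => by
      refine Fin.cases ?_ ?_ i
      · simpa [headsUnion] using h.1
      · intro i
        have := okfrom_get h.2 i
        simpa [headsUnion, Finset.union_assoc] using this

lemma okfrom_append {s : V} : ∀ {L1 L2 : List (Finset V × Finset V)} {acc : Finset V},
    OKfrom s acc L1 → OKfrom s (acc ∪ headsUnion L1) L2 → OKfrom s acc (L1 ++ L2)
  | [], L2, acc, _, h2 => by simpa [headsUnion] using h2
  | e :: L1, L2, acc, h1, h2 => by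
      refine ⟨h1.1, okfrom_append h1.2 ?_⟩
      have : acc ∪ headsUnion (e :: L1) = (acc ∪ e.2) ∪ headsUnion L1 := by
        simp [headsUnion, Finset.union_assoc]
      rwa [this] at h2

/-- Every tail vertex of an edge of an orderable hypergraph is the source or
lies in the head of some edge. -/
lemma cover_of_hasOrdering {H' : DiHypergraph V} {s d : V} (ho : HasOrdering H' s d)
    {e : Finset V × Finset V} (he : e ∈ H'.edges) {x : V} (hx : x ∈ e.1) :
    x = s ∨ ∃ e' ∈ H'.edges, x ∈ e'.2 := by
  obtain ⟨L, -, hLfin, hord, -⟩ := ho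
  have heL : e ∈ L := by rw [← hLfin] at he; simpa using he
  obtain ⟨i, rfl⟩ := List.mem_iff_get.mp heL
  have := hord i hx
  rcases Finset.mem_insert.mp this with h | h
  · exact Or.inl h
  · obtain ⟨e', he', hx'⟩ := mem_headsUnion.mp h
    have : e' ∈ L := List.mem_of_mem_take he'
    exact Or.inr ⟨e', by rw [← hLfin]; simpa using this, hx'⟩

lemma last_edge_of_hasOrdering {H' : DiHypergraph V} {s d : V} (ho : HasOrdering H' s d) :
    ∃ e ∈ H'.edges, d ∈ e.2 := by
  obtain ⟨L, -, hLfin, -, e, hlast, hd⟩ := ho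
  have heL : e ∈ L := List.mem_of_getLast? hlast
  exact ⟨e, by rw [← hLfin]; simpa using heL, hd⟩

end AuxBasic
section AuxCphi
variable {n m : ℕ} {φ : Fin m → Fin 3 → Fin n × Bool}

lemma fin3_cases (j : Fin 3) : j = 0 ∨ j = 1 ∨ j = 2 := by omega

lemma q_mem_varEdge_head {i : Fin m} {j : Fin 3} {v : Fin n} {b : Bool} :
    Vtx.q i j ∈ (varEdge φ v b).2 ↔ φ i j = (v, !b) := by
  simp only [varEdge, Finset.mem_insert, Finset.mem_image, Finset.mem_filter,
    Finset.mem_univ, true_and, Prod.exists]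
  constructor
  · rintro (h | ⟨x, y, hxy, h⟩)
    · exact absurd h (by simp)
    · injection h with h1 h2
      subst h1; subst h2; exact hxy
  · intro h; exact Or.inr ⟨i, j, h, rfl⟩

lemma p_mem_varEdge_head {k : Fin (n+1)} {v : Fin n} {b : Bool} :
    Vtx.p (m := m) k ∈ (varEdge φ v b).2 ↔ k = v.succ := by
  simp only [varEdge, Finset.mem_insert, Finset.mem_image, Finset.mem_filter,
    Finset.mem_univ, true_and, Prod.exists]
  constructor
  · rintro (h | ⟨x, y, hxy, h⟩)
    · simpa using h
    · exact absurd h (by simp)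
  · intro h; exact Or.inl (by simp [h])

lemma f_nmem_varEdge_head {v : Fin n} {b : Bool} :
    Vtx.f ∉ (varEdge φ v b).2 := by
  simp [varEdge]

lemma q0_nmem_varEdge_head {v : Fin n} {b : Bool} :
    Vtx.q0 ∉ (varEdge φ v b).2 := by
  simp [varEdge]

lemma q_mem_nextQ {i i' : Fin m} {j : Fin 3} :
    Vtx.q i j ∈ (nextQ (n := n) i') ↔ (i' : ℕ) + 1 = (i : ℕ) := by
  unfold nextQ
  split
  case isTrue h =>
    simp only [Finset.mem_insert, Finset.mem_singleton]
    constructor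
    · rintro (h1 | h1 | h1) <;> (injection h1 with h2 h3; rw [h2])
    · intro h1
      have hi : i = ⟨(i' : ℕ) + 1, h⟩ := Fin.ext h1.symm
      rcases fin3_cases j with hj | hj | hj <;> rw [hi, hj] <;> simp
  case isFalse h => have := i.isLt; simp; omega

lemma f_mem_nextQ {i' : Fin m} :
    Vtx.f ∈ (nextQ (n := n) i') ↔ (i' : ℕ) + 1 = m := by
  have := i'.isLt
  unfold nextQ
  split
  case isTrue h => simp only [Finset.mem_insert, Finset.mem_singleton]; constructor
                   · rintro (h1|h1|h1) <;> exact absurd h1 (by simp)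
                   · omega
  case isFalse h => simp; omega

lemma p_nmem_nextQ {k : Fin (n+1)} {i' : Fin m} :
    Vtx.p k ∉ (nextQ (n := n) i') := by
  unfold nextQ; split <;> simp

lemma q0_nmem_nextQ {i' : Fin m} :
    Vtx.q0 ∉ (nextQ (n := n) i') := by
  unfold nextQ; split <;> simp

lemma q_mem_q0Edge_head {i : Fin m} {j : Fin 3} :
    Vtx.q i j ∈ (q0Edge n m).2 ↔ (i : ℕ) = 0 := by
  have hm := i.pos
  simp only [q0Edge, dif_pos hm, Finset.mem_insert, Finset.mem_singleton]
  constructor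
  · rintro (h1 | h1 | h1) <;> (injection h1 with h2 h3; rw [h2])
  · intro h1
    have hi : i = ⟨0, hm⟩ := Fin.ext h1
    rcases fin3_cases j with hj | hj | hj <;> rw [hi, hj] <;> simp

lemma f_mem_q0Edge_head :
    Vtx.f ∈ (q0Edge n m).2 ↔ m = 0 := by
  unfold q0Edge
  split
  case isTrue h => simp only [Finset.mem_insert, Finset.mem_singleton]
                   constructor
                   · rintro (h1|h1|h1) <;> exact absurd h1 (by simp)
                   · omega
  case isFalse h => simp; omega

lemma p_nmem_q0Edge_head {k : Fin (n+1)} :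
    Vtx.p k ∉ (q0Edge n m).2 := by
  unfold q0Edge; split <;> simp

lemma q0_nmem_q0Edge_head :
    Vtx.q0 ∉ (q0Edge n m).2 := by
  unfold q0Edge; split <;> simp

lemma mem_Cphi_edges {e : Finset (Vtx n m) × Finset (Vtx n m)} :
    e ∈ (Cphi φ).edges ↔ (∃ v b, e = varEdge φ v b) ∨ (∃ i j, e = clauseEdge i j) ∨
      e = forcedEdge n m ∨ e = q0Edge n m := by
  simp only [Cphi, Finset.mem_union, Finset.mem_image, Finset.mem_univ, true_and,
    Finset.mem_insert, Finset.mem_singleton, Prod.exists]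
  constructor
  · rintro ((⟨v, b, rfl⟩ | ⟨i, j, rfl⟩) | (rfl | rfl))
    · exact Or.inl ⟨v, b, rfl⟩
    · exact Or.inr (Or.inl ⟨i, j, rfl⟩)
    · exact Or.inr (Or.inr (Or.inl rfl))
    · exact Or.inr (Or.inr (Or.inr rfl))
  · rintro (⟨v, b, rfl⟩ | ⟨i, j, rfl⟩ | rfl | rfl)
    · exact Or.inl (Or.inl ⟨v, b, rfl⟩)
    · exact Or.inl (Or.inr ⟨i, j, rfl⟩)
    · exact Or.inr (Or.inl rfl)
    · exact Or.inr (Or.inr rfl)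

lemma varEdge_tail {v : Fin n} {b : Bool} :
    (varEdge φ v b).1 = {Vtx.p (m := m) v.castSucc} := rfl

lemma forced_ne_varEdge {v : Fin n} {b : Bool} : forcedEdge n m ≠ varEdge φ v b := by
  intro h
  have h1 := congrArg Prod.fst h
  simp only [forcedEdge, varEdge] at h1
  have h2 := Finset.singleton_injective h1
  injection h2 with h3
  have := congrArg Fin.val h3
  simp [Fin.last] at this
  omega

lemma forced_ne_clauseEdge {i : Fin m} {j : Fin 3} :
    forcedEdge n m ≠ clauseEdge i j := by
  intro h
  have h1 := congrArg Prod.fst h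
  simp only [forcedEdge, clauseEdge] at h1
  have h2 := Finset.singleton_injective h1
  cases h2

lemma varEdge_ne_clauseEdge {v : Fin n} {b : Bool} {i : Fin m} {j : Fin 3} :
    varEdge φ v b ≠ clauseEdge i j := by
  intro h
  have h1 := congrArg Prod.fst h
  simp only [varEdge, clauseEdge] at h1
  have h2 := Finset.singleton_injective h1
  cases h2

lemma varEdge_inj {v v' : Fin n} {b b' : Bool} (h : varEdge φ v b = varEdge φ v' b') :
    v = v' := by
  have h1 := congrArg Prod.fst h
  simp only [varEdge] at h1
  have h2 := Finset.singleton_injective h1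
  injection h2 with h3
  exact Fin.castSucc_injective n h3

lemma clauseEdge_inj {i i' : Fin m} {j j' : Fin 3}
    (h : clauseEdge (n := n) i j = clauseEdge i' j') : i = i' ∧ j = j' := by
  have h1 := congrArg Prod.fst h
  simp only [clauseEdge] at h1
  have h2 := Finset.singleton_injective h1
  injection h2 with h3 h4
  exact ⟨h3, h4⟩

/-- Classification of edges of `C(φ)` whose head contains `p k`. -/
lemma head_p {e : Finset (Vtx n m) × Finset (Vtx n m)} (he : e ∈ (Cphi φ).edges)
    {k : Fin (n+1)} (h : Vtx.p k ∈ e.2) :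
    ∃ v b, e = varEdge φ v b ∧ v.succ = k := by
  rcases mem_Cphi_edges.mp he with ⟨v, b, rfl⟩ | ⟨i, j, rfl⟩ | rfl | rfl
  · exact ⟨v, b, rfl, (p_mem_varEdge_head.mp h).symm⟩
  · exact absurd h p_nmem_nextQ
  · exact absurd h (by simp [forcedEdge])
  · exact absurd h p_nmem_q0Edge_head

/-- Classification of edges of `C(φ)` whose head contains `q0`. -/
lemma head_q0 {e : Finset (Vtx n m) × Finset (Vtx n m)} (he : e ∈ (Cphi φ).edges)
    (h : Vtx.q0 ∈ e.2) : e = forcedEdge n m := by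
  rcases mem_Cphi_edges.mp he with ⟨v, b, rfl⟩ | ⟨i, j, rfl⟩ | rfl | rfl
  · exact absurd h q0_nmem_varEdge_head
  · exact absurd h q0_nmem_nextQ
  · rfl
  · exact absurd h q0_nmem_q0Edge_head

/-- Classification of edges of `C(φ)` whose head contains `q i j`. -/
lemma head_q {e : Finset (Vtx n m) × Finset (Vtx n m)} (he : e ∈ (Cphi φ).edges)
    {i : Fin m} {j : Fin 3} (h : Vtx.q i j ∈ e.2) :
    (∃ v b, e = varEdge φ v b ∧ φ i j = (v, !b)) ∨
    (∃ i' j', e = clauseEdge i' j' ∧ (i' : ℕ) + 1 = (i : ℕ)) ∨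
    (e = q0Edge n m ∧ (i : ℕ) = 0) := by
  rcases mem_Cphi_edges.mp he with ⟨v, b, rfl⟩ | ⟨i', j', rfl⟩ | rfl | rfl
  · exact Or.inl ⟨v, b, rfl, q_mem_varEdge_head.mp h⟩
  · exact Or.inr (Or.inl ⟨i', j', rfl, q_mem_nextQ.mp h⟩)
  · exact absurd h (by simp [forcedEdge])
  · exact Or.inr (Or.inr ⟨rfl, q_mem_q0Edge_head.mp h⟩)

/-- Classification of edges of `C(φ)` whose head contains `f`. -/
lemma head_f {e : Finset (Vtx n m) × Finset (Vtx n m)} (he : e ∈ (Cphi φ).edges)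
    (h : Vtx.f ∈ e.2) :
    (∃ i j, e = clauseEdge i j ∧ (i : ℕ) + 1 = m) ∨ (e = q0Edge n m ∧ m = 0) := by
  rcases mem_Cphi_edges.mp he with ⟨v, b, rfl⟩ | ⟨i', j', rfl⟩ | rfl | rfl
  · exact absurd h f_nmem_varEdge_head
  · exact Or.inl ⟨i', j', rfl, f_mem_nextQ.mp h⟩
  · exact absurd h (by simp [forcedEdge])
  · exact Or.inr ⟨rfl, f_mem_q0Edge_head.mp h⟩

end AuxCphi
section AuxChains
variable {n m : ℕ} (φ : Fin m → Fin 3 → Fin n × Bool)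

/-- List of chosen variable edges for variables `k, k+1, …, k+t-1`. -/
def vC (bf : Fin n → Bool) : ℕ → ℕ → List (Finset (Vtx n m) × Finset (Vtx n m))
  | 0, _ => []
  | t+1, k =>
      (if h : k < n then varEdge φ ⟨k, h⟩ (bf ⟨k, h⟩) else forcedEdge n m) ::
        vC bf t (k+1)

/-- List of chosen clause edges for clauses `k, …, k+t-1`. -/
def cC (jf : Fin m → Fin 3) : ℕ → ℕ → List (Finset (Vtx n m) × Finset (Vtx n m))
  | 0, _ => []
  | t+1, k =>
      (if h : k < m then clauseEdge ⟨k, h⟩ (jf ⟨k, h⟩) else forcedEdge n m) ::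
        cC jf t (k+1)

lemma mem_vC {bf : Fin n → Bool} :
    ∀ {t k : ℕ} {e}, k + t ≤ n → e ∈ vC φ bf t k →
      ∃ (k' : ℕ) (h : k' < n), k ≤ k' ∧ k' < k + t ∧ e = varEdge φ ⟨k', h⟩ (bf ⟨k', h⟩)
  | 0, k, e, _, he => by simp [vC] at he
  | t+1, k, e, hkt, he => by
      have hk : k < n := by omega
      have hunf : vC φ bf (t+1) k =
          (if h : k < n then varEdge φ ⟨k, h⟩ (bf ⟨k, h⟩) else forcedEdge n m) ::
            vC φ bf t (k+1) := rfl
      rw [hunf, dif_pos hk] at he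
      rcases List.mem_cons.mp he with rfl | he
      · exact ⟨k, hk, le_refl _, by omega, rfl⟩
      · obtain ⟨k', h', hk1, hk2, he⟩ := mem_vC (by omega) he
        exact ⟨k', h', by omega, by omega, he⟩

lemma mem_cC {jf : Fin m → Fin 3} :
    ∀ {t k : ℕ} {e}, k + t ≤ m → e ∈ cC (n := n) jf t k →
      ∃ (k' : ℕ) (h : k' < m), k ≤ k' ∧ k' < k + t ∧ e = clauseEdge ⟨k', h⟩ (jf ⟨k', h⟩)
  | 0, k, e, _, he => by simp [cC] at he
  | t+1, k, e, hkt, he => by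
      have hk : k < m := by omega
      have hunf : cC (n := n) jf (t+1) k =
          (if h : k < m then clauseEdge ⟨k, h⟩ (jf ⟨k, h⟩) else forcedEdge n m) ::
            cC jf t (k+1) := rfl
      rw [hunf, dif_pos hk] at he
      rcases List.mem_cons.mp he with rfl | he
      · exact ⟨k, hk, le_refl _, by omega, rfl⟩
      · obtain ⟨k', h', hk1, hk2, he⟩ := mem_cC (by omega) he
        exact ⟨k', h', by omega, by omega, he⟩

lemma vC_mem_of {bf : Fin n → Bool} :
    ∀ (t k k' : ℕ) (h : k' < n), k ≤ k' → k' < k + t →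
      varEdge φ ⟨k', h⟩ (bf ⟨k', h⟩) ∈ vC φ bf t k
  | 0, k, k', h, h1, h2 => by omega
  | t+1, k, k', h, h1, h2 => by
      have hk : k < n := by omega
      have hunf : vC φ bf (t+1) k =
          (if hh : k < n then varEdge φ ⟨k, hh⟩ (bf ⟨k, hh⟩) else forcedEdge n m) ::
            vC φ bf t (k+1) := rfl
      rw [hunf, dif_pos hk]
      rcases Nat.eq_or_lt_of_le h1 with rfl | h1'
      · exact List.mem_cons_self
      · exact List.mem_cons_of_mem _ (vC_mem_of t (k+1) k' h h1' (by omega))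

lemma nodup_vC {bf : Fin n → Bool} :
    ∀ (t k : ℕ), k + t ≤ n → (vC φ bf t k).Nodup
  | 0, k, _ => List.nodup_nil
  | t+1, k, h => by
      have hk : k < n := by omega
      have hunf : vC φ bf (t+1) k =
          (if hh : k < n then varEdge φ ⟨k, hh⟩ (bf ⟨k, hh⟩) else forcedEdge n m) ::
            vC φ bf t (k+1) := rfl
      rw [hunf, dif_pos hk]
      refine List.nodup_cons.mpr ⟨?_, nodup_vC t (k+1) (by omega)⟩
      intro hmem
      obtain ⟨k', h', hk1, hk2, heq⟩ := mem_vC φ (by omega) hmem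
      have := congrArg Fin.val (varEdge_inj heq)
      simp at this
      omega

lemma nodup_cC {jf : Fin m → Fin 3} :
    ∀ (t k : ℕ), k + t ≤ m → (cC (n := n) jf t k).Nodup
  | 0, k, _ => List.nodup_nil
  | t+1, k, h => by
      have hk : k < m := by omega
      have hunf : cC (n := n) jf (t+1) k =
          (if hh : k < m then clauseEdge ⟨k, hh⟩ (jf ⟨k, hh⟩) else forcedEdge n m) ::
            cC jf t (k+1) := rfl
      rw [hunf, dif_pos hk]
      refine List.nodup_cons.mpr ⟨?_, nodup_cC t (k+1) (by omega)⟩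
      intro hmem
      obtain ⟨k', h', hk1, hk2, heq⟩ := mem_cC (by omega) hmem
      have := congrArg Fin.val (clauseEdge_inj heq).1
      simp at this
      omega

lemma ok_vC {bf : Fin n → Bool} :
    ∀ (t k : ℕ) (acc : Finset (Vtx n m)) (hkt : k + t ≤ n),
      Vtx.p (⟨k, by omega⟩ : Fin (n+1)) ∈ insert (Vtx.p (0 : Fin (n+1))) acc →
      OKfrom (Vtx.p 0) acc (vC φ bf t k)
  | 0, k, acc, _, _ => trivial
  | t+1, k, acc, hkt, hmem => by
      have hk : k < n := by omega
      have hunf : vC φ bf (t+1) k =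
          (if hh : k < n then varEdge φ ⟨k, hh⟩ (bf ⟨k, hh⟩) else forcedEdge n m) ::
            vC φ bf t (k+1) := rfl
      rw [hunf, dif_pos hk]
      refine ⟨?_, ?_⟩
      · intro x hx
        rw [varEdge_tail, Finset.mem_singleton] at hx
        subst hx
        have hcast : Fin.castSucc (⟨k, hk⟩ : Fin n) = (⟨k, by omega⟩ : Fin (n+1)) :=
          Fin.ext (by simp)
        rw [hcast]
        exact hmem
      · apply ok_vC t (k+1) _ (by omega)
        apply Finset.mem_insert_of_mem
        apply Finset.mem_union_right
        apply p_mem_varEdge_head.mpr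
        exact Fin.ext (by simp)

lemma ok_cC {jf : Fin m → Fin 3} {s : Vtx n m} :
    ∀ (t k : ℕ) (acc : Finset (Vtx n m)) (hkt : k + t ≤ m),
      (∀ hk : k < m, Vtx.q ⟨k, hk⟩ (jf ⟨k, hk⟩) ∈ insert s acc) →
      OKfrom s acc (cC (n := n) jf t k)
  | 0, k, acc, _, _ => trivial
  | t+1, k, acc, hkt, hmem => by
      have hk : k < m := by omega
      have hunf : cC (n := n) jf (t+1) k =
          (if hh : k < m then clauseEdge ⟨k, hh⟩ (jf ⟨k, hh⟩) else forcedEdge n m) ::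
            cC jf t (k+1) := rfl
      rw [hunf, dif_pos hk]
      refine ⟨?_, ?_⟩
      · intro x hx
        simp only [clauseEdge, Finset.mem_singleton] at hx
        subst hx
        exact hmem hk
      · apply ok_cC t (k+1) _ (by omega)
        intro hk1
        apply Finset.mem_insert_of_mem
        apply Finset.mem_union_right
        have : (clauseEdge (n := n) ⟨k, hk⟩ (jf ⟨k, hk⟩)).2 = nextQ ⟨k, hk⟩ := rfl
        rw [this]
        exact q_mem_nextQ.mpr (by simp)

lemma getLast_cC {jf : Fin m → Fin 3} :
    ∀ (t k : ℕ), k + t + 1 = m →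
      ∃ e, (cC (n := n) jf (t+1) k).getLast? = some e ∧ Vtx.f ∈ e.2
  | 0, k, h => by
      have hk : k < m := by omega
      have hunf : cC (n := n) jf 1 k =
          (if hh : k < m then clauseEdge ⟨k, hh⟩ (jf ⟨k, hh⟩) else forcedEdge n m) :: [] := rfl
      rw [hunf, dif_pos hk]
      refine ⟨clauseEdge ⟨k, hk⟩ (jf ⟨k, hk⟩), by simp, ?_⟩
      show Vtx.f ∈ (nextQ (n := n) (⟨k, hk⟩ : Fin m))
      exact f_mem_nextQ.mpr (by simp; omega)
  | t+1, k, h => by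
      obtain ⟨e, he, hf⟩ := getLast_cC t (k+1) (by omega)
      refine ⟨e, ?_, hf⟩
      have h1 : cC (n := n) jf (t+1+1) k =
          (if hh : k < m then clauseEdge ⟨k, hh⟩ (jf ⟨k, hh⟩) else forcedEdge n m) ::
            cC jf (t+1) (k+1) := rfl
      have h2 : cC (n := n) jf (t+1) (k+1) =
          (if hh : k+1 < m then clauseEdge ⟨k+1, hh⟩ (jf ⟨k+1, hh⟩) else forcedEdge n m) ::
            cC jf t (k+2) := rfl
      rw [h1, h2, List.getLast?_cons_cons, ← h2]
      exact he

end AuxChains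
section AuxMain
variable {n m : ℕ} (φ : Fin m → Fin 3 → Fin n × Bool)

lemma var_present {H' : DiHypergraph (Vtx n m)} (hsub : H'.edges ⊆ (Cphi φ).edges)
    (ho : HasOrdering H' (Vtx.p 0) Vtx.f) (hforced : forcedEdge n m ∈ H'.edges) :
    ∀ v : Fin n, ∃ b, varEdge φ v b ∈ H'.edges := by
  have key : ∀ t (k : ℕ) (hk : k < n), k + t + 1 = n →
      ∃ b, varEdge φ ⟨k, hk⟩ b ∈ H'.edges := by
    intro t
    induction t with
    | zero =>
        intro k hk hkn
        have hcov := cover_of_hasOrdering ho hforced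
          (x := Vtx.p (Fin.last n)) (by simp [forcedEdge])
        rcases hcov with h | ⟨e', he', hx⟩
        · exfalso
          injection h with h1
          have h2 : n = 0 := congrArg Fin.val h1
          omega
        · obtain ⟨v, b, rfl, hv⟩ := head_p (hsub he') hx
          have hval : (v : ℕ) + 1 = n := congrArg Fin.val hv
          have hv2 : v = ⟨k, hk⟩ := Fin.ext (show (v : ℕ) = k by omega)
          exact ⟨b, by rwa [hv2] at he'⟩
    | succ t ih =>
        intro k hk hkn
        obtain ⟨b, hb⟩ := ih (k+1) (by omega) (by omega)
        have htail : Vtx.p (⟨k+1, by omega⟩ : Fin (n+1)) ∈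
            (varEdge φ (⟨k+1, by omega⟩ : Fin n) b).1 := by
          rw [varEdge_tail, Finset.mem_singleton]
          exact congrArg Vtx.p (Fin.ext (by simp))
        have hcov := cover_of_hasOrdering ho hb htail
        rcases hcov with h | ⟨e', he', hx⟩
        · exfalso
          injection h with h1
          exact Nat.succ_ne_zero k (congrArg Fin.val h1)
        · obtain ⟨w, b', rfl, hw⟩ := head_p (hsub he') hx
          have hval : (w : ℕ) + 1 = k + 1 := congrArg Fin.val hw
          have hw2 : w = ⟨k, hk⟩ := Fin.ext (show (w : ℕ) = k by omega)
          exact ⟨b', by rwa [hw2] at he'⟩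
  intro v
  obtain ⟨b, hb⟩ := key (n - 1 - v) v v.isLt (by have := v.isLt; omega)
  exact ⟨b, hb⟩

lemma noBlockCore {H' : DiHypergraph (Vtx n m)}
    (hp : IsHyperpath (Cphi φ) (Vtx.p 0) Vtx.f H')
    (hforced : forcedEdge n m ∈ H'.edges)
    (bf : Fin n → Bool) (hbf : ∀ v, varEdge φ v (bf v) ∈ H'.edges)
    (jf : Fin m → Fin 3) (a : ℕ) (ha : a < m)
    (hjf : ∀ (k : ℕ) (hk : k < m), a ≤ k → clauseEdge ⟨k, hk⟩ (jf ⟨k, hk⟩) ∈ H'.edges)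
    (v0 : Fin n) (hv0 : Vtx.q ⟨a, ha⟩ (jf ⟨a, ha⟩) ∈ (varEdge φ v0 (bf v0)).2) :
    False := by
  classical
  set L : List (Finset (Vtx n m) × Finset (Vtx n m)) :=
    vC φ bf n 0 ++ cC (n := n) jf (m - a) a with hLdef
  have hLsub : ∀ e ∈ L, e ∈ H'.edges := by
    intro e he
    rcases List.mem_append.mp he with h | h
    · obtain ⟨k', h', _, _, rfl⟩ := mem_vC φ (by omega) h
      exact hbf _
    · obtain ⟨k', h', hk1, _, rfl⟩ := mem_cC (by omega) h
      exact hjf k' h' hk1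
  let H'' : DiHypergraph (Vtx n m) :=
    { verts := H'.verts
      edges := L.toFinset
      tail_sub := fun e he => H'.tail_sub e (hLsub e (List.mem_toFinset.mp he))
      head_sub := fun e he => H'.head_sub e (hLsub e (List.mem_toFinset.mp he))
      disj := fun e he => H'.disj e (hLsub e (List.mem_toFinset.mp he)) }
  have hsub'' : Subhg H'' H' :=
    ⟨Finset.Subset.refl _, fun e he => hLsub e (List.mem_toFinset.mp he)⟩
  have hord : HasOrdering H'' (Vtx.p 0) Vtx.f := by
    refine ⟨L, ?_, rfl, ?_, ?_⟩
    · refine List.Nodup.append (nodup_vC φ n 0 (by omega))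
        (nodup_cC (n := n) (m - a) a (by omega)) ?_
      intro e h1 h2
      obtain ⟨k1, hh1, _, _, rfl⟩ := mem_vC φ (by omega) h1
      obtain ⟨k2, hh2, _, _, heq⟩ := mem_cC (by omega) h2
      exact varEdge_ne_clauseEdge heq
    · intro i
      have hok : OKfrom (Vtx.p (0 : Fin (n+1))) ∅ L := by
        refine okfrom_append ?_ ?_
        · exact ok_vC φ n 0 ∅ (by omega) (Finset.mem_insert_self _ _)
        · apply ok_cC (m - a) a _ (by omega)
          intro hk
          apply Finset.mem_insert_of_mem
          apply Finset.mem_union_right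
          apply mem_headsUnion.mpr
          refine ⟨varEdge φ v0 (bf v0), ?_, hv0⟩
          exact vC_mem_of φ n 0 v0 v0.isLt (by omega) (by have := v0.isLt; omega)
      have := okfrom_get hok i
      simpa using this
    · obtain ⟨e, he, hf⟩ := getLast_cC (n := n) (jf := jf) (m - a - 1) a (by omega)
      refine ⟨e, ?_, hf⟩
      rw [hLdef, List.getLast?_append,
        show m - a = m - a - 1 + 1 from by omega, he]
      rfl
  have heq := hp.2.2 H'' hsub'' hord
  have hf : forcedEdge n m ∈ L.toFinset := by
    show forcedEdge n m ∈ H''.edges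
    rw [congrArg DiHypergraph.edges heq]
    exact hforced
  rw [List.mem_toFinset] at hf
  rcases List.mem_append.mp hf with h | h
  · obtain ⟨k', h', _, _, heq'⟩ := mem_vC φ (by omega) h
    exact forced_ne_varEdge heq'
  · obtain ⟨k', h', _, _, heq'⟩ := mem_cC (by omega) h
    exact forced_ne_clauseEdge heq'

lemma chain_exists {H' : DiHypergraph (Vtx n m)} (hsub : H'.edges ⊆ (Cphi φ).edges)
    (ho : HasOrdering H' (Vtx.p 0) Vtx.f) (hm : 0 < m) :
    ∃ (a : ℕ) (ha : a < m) (jf : Fin m → Fin 3),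
      (∀ (k : ℕ) (hk : k < m), a ≤ k → clauseEdge ⟨k, hk⟩ (jf ⟨k, hk⟩) ∈ H'.edges) ∧
      ((∃ v b, varEdge φ v b ∈ H'.edges ∧
          Vtx.q ⟨a, ha⟩ (jf ⟨a, ha⟩) ∈ (varEdge φ v b).2) ∨ a = 0) := by
  classical
  obtain ⟨e, he, hf⟩ := last_edge_of_hasOrdering ho
  rcases head_f (hsub he) hf with ⟨i1, j1, rfl, hi1⟩ | ⟨-, h0⟩
  swap
  · omega
  have step : ∀ (a : ℕ) (ha : a < m) (jf : Fin m → Fin 3),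
      (∀ (k : ℕ) (hk : k < m), a ≤ k → clauseEdge ⟨k, hk⟩ (jf ⟨k, hk⟩) ∈ H'.edges) →
      ∃ (a' : ℕ) (ha' : a' < m) (jf' : Fin m → Fin 3),
        (∀ (k : ℕ) (hk : k < m), a' ≤ k → clauseEdge ⟨k, hk⟩ (jf' ⟨k, hk⟩) ∈ H'.edges) ∧
        ((∃ v b, varEdge φ v b ∈ H'.edges ∧
            Vtx.q ⟨a', ha'⟩ (jf' ⟨a', ha'⟩) ∈ (varEdge φ v b).2) ∨ a' = 0) := by
    intro a
    induction a with
    | zero => intro ha jf hch; exact ⟨0, ha, jf, hch, Or.inr rfl⟩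
    | succ a ih =>
        intro ha jf hch
        have hce := hch (a+1) ha le_rfl
        have hcov := cover_of_hasOrdering ho hce
          (x := Vtx.q ⟨a+1, ha⟩ (jf ⟨a+1, ha⟩)) (by simp [clauseEdge])
        rcases hcov with h | ⟨e', he', hx⟩
        · exact absurd h (by simp)
        · rcases head_q (hsub he') hx with ⟨v, b, rfl, -⟩ | ⟨i', j', rfl, hi'⟩ | ⟨-, h0⟩
          · exact ⟨a+1, ha, jf, hch, Or.inl ⟨v, b, he', hx⟩⟩
          · have ha' : a < m := by omega
            have hival : (i' : ℕ) = a := by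
              have h2 : (i' : ℕ) + 1 = a + 1 := hi'
              omega
            refine ih ha' (Function.update jf ⟨a, ha'⟩ j') ?_
            intro k hk hak
            by_cases hk0 : k = a
            · have hik : i' = ⟨k, hk⟩ := Fin.ext (show (i' : ℕ) = k by omega)
              have hupd : Function.update jf ⟨a, ha'⟩ j' ⟨k, hk⟩ = j' := by
                have hfin : (⟨k, hk⟩ : Fin m) = ⟨a, ha'⟩ := Fin.ext (show k = a from hk0)
                rw [hfin, Function.update_self]
              rw [hupd]
              rwa [hik] at he'
            · rw [Function.update_of_ne
                (fun hcontra => hk0 (congrArg Fin.val hcontra))]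
              exact hch k hk (by omega)
          · exfalso
            have h2 : a + 1 = 0 := h0
            omega
  refine step (m-1) (by omega) (fun _ => j1) ?_
  intro k hk hmk
  have hik : (⟨k, hk⟩ : Fin m) = i1 := Fin.ext (show k = (i1 : ℕ) by omega)
  rw [hik]
  exact he

end AuxMain

/-- If a hyperpath `H'` from `p_0` to `f` in `C(φ)` contains the forced edge,
then the assignment setting `v_i` true iff `H'` contains the 'true' edge for
`v_i` satisfies every clause of `φ`. -/
theorem cphi_hyperpath_gives_sat {n m : ℕ} (φ : Fin m → Fin 3 → Fin n × Bool)
    (H' : DiHypergraph (Vtx n m))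
    (hp : IsHyperpath (Cphi φ) (Vtx.p 0) Vtx.f H')
    (hforced : forcedEdge n m ∈ H'.edges) :
    SatAssign φ (fun i => decide (varEdge φ i true ∈ H'.edges)) := by
  classical
  obtain ⟨hsubhg, ho, hmin⟩ := hp
  have hsub : H'.edges ⊆ (Cphi φ).edges := hsubhg.2
  intro i
  have hm : 0 < m := i.pos
  have hvp := var_present φ hsub ho hforced
  have hnb : ∀ (i0 : Fin m) (j0 : Fin 3) (v : Fin n) (b : Bool),
      clauseEdge i0 j0 ∈ H'.edges → varEdge φ v b ∈ H'.edges →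
      Vtx.q i0 j0 ∉ (varEdge φ v b).2 := by
    intro i0 j0 v b hce hve hq
    obtain ⟨a, ha, jf, hch, hstop⟩ := chain_exists φ hsub ho hm
    rcases hstop with ⟨v1, b1, hv1, hq1⟩ | rfl
    · set bf : Fin n → Bool := fun w => if w = v1 then b1 else Classical.choose (hvp w)
        with hbf
      refine noBlockCore φ ⟨hsubhg, ho, hmin⟩ hforced bf ?_ jf a ha hch v1 ?_
      · intro w
        by_cases hw : w = v1
        · subst hw; simp only [hbf, if_pos rfl]; exact hv1
        · simp only [hbf, if_neg hw]; exact Classical.choose_spec (hvp w)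
      · simp only [hbf, if_pos rfl]; exact hq1
    · set jf' := Function.update jf i0 j0 with hjf'
      set bf : Fin n → Bool := fun w => if w = v then b else Classical.choose (hvp w)
        with hbf
      refine noBlockCore φ ⟨hsubhg, ho, hmin⟩ hforced bf ?_ jf' i0 i0.isLt ?_ v ?_
      · intro w
        by_cases hw : w = v
        · subst hw; simp only [hbf, if_pos rfl]; exact hve
        · simp only [hbf, if_neg hw]; exact Classical.choose_spec (hvp w)
      · intro k hk hik
        by_cases hk0 : k = (i0 : ℕ)
        · have hfin : (⟨k, hk⟩ : Fin m) = i0 := Fin.ext hk0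
          rw [hfin, hjf', Function.update_self]
          exact hce
        · rw [hjf', Function.update_of_ne (fun hc => hk0 (congrArg Fin.val hc))]
          exact hch k hk (Nat.zero_le _)
      · have h1 : (⟨(i0 : ℕ), i0.isLt⟩ : Fin m) = i0 := Fin.ext rfl
        rw [h1, hjf', Function.update_self]
        simp only [hbf, if_pos rfl]
        exact hq
  obtain ⟨a, ha, jf, hch, hstop⟩ := chain_exists φ hsub ho hm
  have ha0 : a = 0 := by
    rcases hstop with ⟨v1, b1, hv1, hq1⟩ | h
    · exact absurd hq1 (hnb _ _ _ _ (hch a ha le_rfl) hv1)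
    · exact h
  subst ha0
  have hcei : clauseEdge i (jf i) ∈ H'.edges := hch (i : ℕ) i.isLt (Nat.zero_le _)
  rcases hps : φ i (jf i) with ⟨v, s⟩
  have hq : Vtx.q i (jf i) ∈ (varEdge φ v (!s)).2 :=
    q_mem_varEdge_head.mpr (by rw [hps, Bool.not_not])
  have hnot : varEdge φ v (!s) ∉ H'.edges := fun h => hnb i (jf i) v (!s) hcei h hq
  obtain ⟨b, hb⟩ := hvp v
  have hbs : b = s := by
    by_contra hbs
    have hb2 : b = !s := by cases b <;> cases s <;> simp_all
    rw [hb2] at hb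
    exact hnot hb
  rw [hbs] at hb
  refine ⟨jf i, ?_⟩
  simp only [hps]
  show (decide (varEdge φ v true ∈ H'.edges)) = s
  cases s with
  | true => simp [hb]
  | false =>
      have hnt : varEdge φ v true ∉ H'.edges := by simpa using hnot
      simp [hnt]
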